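/- arXiv:1602.06512 — 2 statements merged into one kernel-verified Lean document; each statement's English description precedes it below -/
import Mathlib

section
/- (Proposition 2.1) The (|Δ|+|𝒞|)×(|Δ|+|𝒞|) coefficient matrix Q(z) of the linear system in Theorem 1.1 has determinant a nonzero polynomial in z; its unique highest-degree monomial is (−1)^{|Δ|+|𝒞|}·z^{|Δ|+∑_{A∈𝒞}|A|} / ∏_{A∈𝒞} P_{A_1→A_2⋯A_{|A|}}. Hence the linear system is nonsingular for all but finitely many z. -/
open MeasureTheory

section Patterns

variable {Ω Δ : Type*}

/-- Pattern `K` occurs as a run ending at time `n` (time indices start at 1). -/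
def occursAt (Z : ℕ → Ω → Δ) (K : List Δ) (ω : Ω) (n : ℕ) : Prop :=
  K.length ≤ n ∧ ∀ m : Fin K.length, Z (n - K.length + 1 + m) ω = K.get m

/-- First time `K` occurs as a run (`0` if it never occurs). -/
noncomputable def patTime (Z : ℕ → Ω → Δ) (K : List Δ) (ω : Ω) : ℕ :=
  sInf {n | occursAt Z K ω n}

/-- First time some pattern of `C` occurs as a run (`0` if never). -/
noncomputable def hitTime (Z : ℕ → Ω → Δ) (C : Finset (List Δ)) (ω : Ω) : ℕ :=
  sInf {n | ∃ K ∈ C, occursAt Z K ω n}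

/-- For `L = L₁L₂⋯Lₘ`, the product `P_{L₁L₂}⋯P_{L_{m-1}L_m}`; in particular
`tailProb Pm (i :: K) = P_{i→K}` in the notation of the paper. -/
def tailProb (Pm : Δ → Δ → ℝ) (L : List Δ) : ℝ :=
  (List.zipWith Pm L L.tail).prod

/-- `{Z_n}_{n≥1}` is a time homogeneous Markov chain with one-step transition
matrix `Pm`, expressed via cylinder events. -/
def IsMarkov [MeasurableSpace Ω] (P : Measure Ω) (Z : ℕ → Ω → Δ) (Pm : Δ → Δ → ℝ) : Prop :=
  ∀ (n : ℕ) (w : ℕ → Δ) (j : Δ), 1 ≤ n →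
    (P {ω | (∀ k, 1 ≤ k → k ≤ n → Z k ω = w k) ∧ Z (n+1) ω = j}).toReal
      = (P {ω | ∀ k, 1 ≤ k → k ≤ n → Z k ω = w k}).toReal * Pm (w n) j

/-- `F_i(z) = ∑_{n ≥ 1} P(Z_n = i, τ > n) z^{-n}`. -/
noncomputable def Fgen [MeasurableSpace Ω] (P : Measure Ω) (Z : ℕ → Ω → Δ)
    (C : Finset (List Δ)) (i : Δ) (z : ℝ) : ℝ :=
  ∑' n : ℕ, (P {ω | Z (n+1) ω = i ∧ n + 1 < hitTime Z C ω}).toReal * z⁻¹ ^ (n+1)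

/-- `f_K(z) = ∑_{n ≥ 1} P(τ = τ_K = n) z^{-n}`. -/
noncomputable def fgen [MeasurableSpace Ω] (P : Measure Ω) (Z : ℕ → Ω → Δ)
    (C : Finset (List Δ)) (K : List Δ) (z : ℝ) : ℝ :=
  ∑' n : ℕ, (P {ω | hitTime Z C ω = n + 1 ∧ patTime Z K ω = n + 1}).toReal * z⁻¹ ^ (n+1)

/-- The function `g̃_{KT}(z)` of the paper. -/
noncomputable def gtilde [DecidableEq Δ] (Pm : Δ → Δ → ℝ) (K T : List Δ) (z : ℝ) : ℝ :=
  ((∑ r ∈ Finset.Ico 1 T.length,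
      if r ≤ K.length ∧ K.drop (K.length - r) = T.take r then
        z ^ r * tailProb Pm (T.drop (r - 1)) else 0)
    + (if K = T then z ^ T.length else 0)) / tailProb Pm T

end Patterns

/-- The coefficient matrix `Q(z)` of the linear system (1.1) of Theorem 1.1. -/
noncomputable def Qmat {Δ : Type*} [Fintype Δ] [DecidableEq Δ] [Inhabited Δ]
    (Pm : Δ → Δ → ℝ) (C : Finset (List Δ)) (z : ℝ) :
    Matrix (Δ ⊕ {K : List Δ // K ∈ C}) (Δ ⊕ {K : List Δ // K ∈ C}) ℝ :=
  Matrix.of fun row col =>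
    match row, col with
    | Sum.inl j, Sum.inl i => Pm i j - (if i = j then z else 0)
    | Sum.inl j, Sum.inr K => -z * (if K.1.getLast? = some j then (1:ℝ) else 0)
    | Sum.inr T, Sum.inl i => Pm i T.1.headI
    | Sum.inr T, Sum.inr K => -(gtilde Pm K.1 T.1 z)

/-! Entries of the row of `Q(z)` indexed by `j ∈ Δ` are polynomials in `z` of degree at most
`1`, and those of the row indexed by `T ∈ 𝒞` have degree at most `|T|`. Hence the coefficient
of `z ^ (|Δ| + ∑ |A|)` in `det Q(z)` is the determinant of the row-wise top coefficients.
That matrix is block upper triangular, with diagonal blocks `-1` and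
`-diag (1 / P_{T₁→T₂⋯T_{|T|}})`: the constants `P_{i T₁}` vanish in degree `|T| ≥ 1`, and
`g̃_{KT}` reaches degree `|T|` only for `K = T`.
-/

open Polynomial

theorem Polynomial.coeff_prod_sum_of_natDegree_le {ι R : Type*} [CommSemiring R]
    (s : Finset ι) (f : ι → R[X]) (d : ι → ℕ) (h : ∀ i ∈ s, (f i).natDegree ≤ d i) :
    (∏ i ∈ s, f i).coeff (∑ i ∈ s, d i) = ∏ i ∈ s, (f i).coeff (d i) := by
  induction s using Finset.cons_induction with
  | empty => simp
  | cons a s ha ih =>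
    have hs : ∀ i ∈ s, (f i).natDegree ≤ d i := fun i hi => h i (Finset.mem_cons_of_mem hi)
    have hprod : (∏ i ∈ s, f i).natDegree ≤ ∑ i ∈ s, d i :=
      (natDegree_prod_le _ _).trans (Finset.sum_le_sum hs)
    rw [Finset.prod_cons, Finset.sum_cons, Finset.prod_cons,
      coeff_mul_add_eq_of_natDegree_le (h a (Finset.mem_cons_self a s)) hprod, ih hs]

namespace Matrix

variable {n R : Type*} [Fintype n] [DecidableEq n] [CommRing R]

theorem natDegree_det_le_of_natDegree_le (M : Matrix n n R[X]) (d : n → ℕ)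
    (h : ∀ i j, (M i j).natDegree ≤ d i) : M.det.natDegree ≤ ∑ i, d i := by
  rw [det_apply]
  refine natDegree_sum_le_of_forall_le _ _ fun σ _ => ?_
  rw [Units.smul_def]
  refine (natDegree_smul_le _ _).trans ((natDegree_prod_le _ _).trans ?_)
  calc ∑ i, (M (σ i) i).natDegree ≤ ∑ i, d (σ i) := Finset.sum_le_sum fun i _ => h _ _
    _ = ∑ i, d i := Equiv.sum_comp σ d

theorem coeff_det_of_natDegree_le (M : Matrix n n R[X]) (d : n → ℕ)
    (h : ∀ i j, (M i j).natDegree ≤ d i) :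
    M.det.coeff (∑ i, d i) = (of fun i j => (M i j).coeff (d i)).det := by
  rw [det_apply, det_apply, finsetSum_coeff]
  refine Finset.sum_congr rfl fun σ _ => ?_
  rw [coeff_smul, ← Equiv.sum_comp σ d,
    coeff_prod_sum_of_natDegree_le _ _ _ fun i _ => h (σ i) i]
  rfl

end Matrix

section Patterns

variable {Δ : Type*}

def rowDegree (C : Finset (List Δ)) : Δ ⊕ {K : List Δ // K ∈ C} → ℕ :=
  Sum.elim (fun _ => 1) fun T => T.1.length

theorem sum_rowDegree [Fintype Δ] (C : Finset (List Δ)) :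
    ∑ i, rowDegree C i = Fintype.card Δ + ∑ A ∈ C, A.length := by
  simp [rowDegree, Fintype.sum_sum_type, Finset.sum_attach C List.length]

variable [DecidableEq Δ] (Pm : Δ → Δ → ℝ)

noncomputable def gtildePoly (K T : List Δ) : ℝ[X] :=
  ((∑ r ∈ Finset.Ico 1 T.length,
      if r ≤ K.length ∧ K.drop (K.length - r) = T.take r then
        X ^ r * C (tailProb Pm (T.drop (r - 1))) else 0)
    + (if K = T then X ^ T.length else 0)) * C (tailProb Pm T)⁻¹

theorem eval_gtildePoly (K T : List Δ) (z : ℝ) :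
    (gtildePoly Pm K T).eval z = gtilde Pm K T z := by
  simp only [gtildePoly, gtilde, div_eq_mul_inv, eval_mul, eval_add, eval_C, eval_finsetSum,
    apply_ite (eval z), eval_pow, eval_X, eval_zero]

theorem natDegree_gtildePoly_le (K T : List Δ) : (gtildePoly Pm K T).natDegree ≤ T.length := by
  refine (natDegree_mul_C_le _ _).trans ((natDegree_add_le _ _).trans (max_le ?_ ?_))
  · refine natDegree_sum_le_of_forall_le _ _ fun r hr => ?_
    split_ifs
    · exact (natDegree_mul_C_le _ _).trans
        ((natDegree_X_pow_le r).trans (Finset.mem_Ico.mp hr).2.le)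
    · simp
  · split_ifs <;> simp

theorem coeff_gtildePoly_length (K T : List Δ) :
    (gtildePoly Pm K T).coeff T.length = if K = T then (tailProb Pm T)⁻¹ else 0 := by
  have hsum : ∀ r ∈ Finset.Ico 1 T.length,
      (if r ≤ K.length ∧ K.drop (K.length - r) = T.take r then
        X ^ r * C (tailProb Pm (T.drop (r - 1))) else 0).coeff T.length = 0 := by
    intro r hr
    split_ifs
    · rw [coeff_mul_C, coeff_X_pow, if_neg (Finset.mem_Ico.mp hr).2.ne', zero_mul]
    · rfl
  rw [gtildePoly, coeff_mul_C, coeff_add, finsetSum_coeff, Finset.sum_eq_zero hsum, zero_add]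
  split_ifs <;> simp

variable [Inhabited Δ] (C : Finset (List Δ))

noncomputable def QmatPoly :
    Matrix (Δ ⊕ {K : List Δ // K ∈ C}) (Δ ⊕ {K : List Δ // K ∈ C}) ℝ[X] :=
  Matrix.of fun row col =>
    match row, col with
    | Sum.inl j, Sum.inl i => Polynomial.C (Pm i j) - (if i = j then X else 0)
    | Sum.inl j, Sum.inr K => -X * (if K.1.getLast? = some j then 1 else 0)
    | Sum.inr T, Sum.inl i => Polynomial.C (Pm i T.1.headI)
    | Sum.inr T, Sum.inr K => -gtildePoly Pm K.1 T.1

theorem natDegree_QmatPoly_le (r c : Δ ⊕ {K : List Δ // K ∈ C}) :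
    (QmatPoly Pm C r c).natDegree ≤ rowDegree C r := by
  rcases r with j | T <;> rcases c with i | K
  · simp only [QmatPoly, rowDegree, Matrix.of_apply, Sum.elim_inl]
    refine (natDegree_sub_le _ _).trans (max_le (by simp) ?_)
    split_ifs <;> simp
  · simp only [QmatPoly, rowDegree, Matrix.of_apply, Sum.elim_inl]
    split_ifs <;> simp
  · simp [QmatPoly, rowDegree]
  · simpa [QmatPoly, rowDegree] using natDegree_gtildePoly_le Pm K.1 T.1

variable [Fintype Δ]

theorem map_eval_QmatPoly (z : ℝ) : (QmatPoly Pm C).map (eval z) = Qmat Pm C z := by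
  ext (j | T) (i | K) <;>
    simp [QmatPoly, Qmat, eval_gtildePoly, apply_ite (eval z)]

theorem eval_det_QmatPoly (z : ℝ) : (QmatPoly Pm C).det.eval z = (Qmat Pm C z).det := by
  rw [← map_eval_QmatPoly, ← coe_evalRingHom, RingHom.map_det, RingHom.mapMatrix_apply]

theorem det_coeff_rowDegree_QmatPoly (hne : ∀ K ∈ C, K ≠ []) :
    (Matrix.of fun r c => (QmatPoly Pm C r c).coeff (rowDegree C r)).det
      = (-1) ^ (Fintype.card Δ + C.card) * (∏ A ∈ C, tailProb Pm A)⁻¹ := by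
  have hblocks : (Matrix.of fun r c => (QmatPoly Pm C r c).coeff (rowDegree C r))
      = Matrix.fromBlocks (-1) (Matrix.of fun j K => if K.1.getLast? = some j then -1 else 0) 0
          (-Matrix.diagonal fun K => (tailProb Pm K.1)⁻¹) := by
    ext (j | T) (i | K)
    · by_cases hij : i = j <;> simp [QmatPoly, rowDegree, hij, Ne.symm]
    · by_cases hK : K.1.getLast? = some j <;> simp [QmatPoly, rowDegree, hK]
    · simp [QmatPoly, rowDegree, coeff_C, hne T.1 T.2]
    · by_cases hKT : K = T
      · subst hKT
        simp [QmatPoly, rowDegree, coeff_gtildePoly_length]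
      · have hKT' : K.1 ≠ T.1 := fun h => hKT (Subtype.ext h)
        simp [QmatPoly, rowDegree, coeff_gtildePoly_length, hKT', Ne.symm hKT]
  rw [hblocks, Matrix.det_fromBlocks_zero₂₁, Matrix.det_neg, Matrix.det_neg, Matrix.det_one,
    Matrix.det_diagonal, Finset.prod_coe_sort C fun A => (tailProb Pm A)⁻¹,
    Finset.prod_inv_distrib, Fintype.card_coe, pow_add]
  ring

end Patterns

theorem statement4_general {Δ : Type*} [Fintype Δ] [DecidableEq Δ] [Inhabited Δ]
    (Pm : Δ → Δ → ℝ) (C : Finset (List Δ)) (hne : ∀ K ∈ C, K ≠ [])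
    (hpos : ∀ K ∈ C, 0 < tailProb Pm K) :
    ∃ p : Polynomial ℝ,
      (∀ z : ℝ, p.eval z = (Qmat Pm C z).det) ∧
      p ≠ 0 ∧
      p.natDegree = Fintype.card Δ + ∑ A ∈ C, A.length ∧
      p.leadingCoeff = (-1) ^ (Fintype.card Δ + C.card) / ∏ A ∈ C, tailProb Pm A ∧
      {z : ℝ | (Qmat Pm C z).det = 0}.Finite := by
  set p := (QmatPoly Pm C).det
  have heval : ∀ z, p.eval z = (Qmat Pm C z).det := eval_det_QmatPoly Pm C
  have hdeg_le : p.natDegree ≤ Fintype.card Δ + ∑ A ∈ C, A.length := by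
    rw [← sum_rowDegree]
    exact Matrix.natDegree_det_le_of_natDegree_le _ _ (natDegree_QmatPoly_le Pm C)
  have hcoeff : p.coeff (Fintype.card Δ + ∑ A ∈ C, A.length)
      = (-1) ^ (Fintype.card Δ + C.card) / ∏ A ∈ C, tailProb Pm A := by
    rw [← sum_rowDegree, Matrix.coeff_det_of_natDegree_le _ _ (natDegree_QmatPoly_le Pm C),
      det_coeff_rowDegree_QmatPoly Pm C hne, div_eq_mul_inv]
  have hcoeff_ne : p.coeff (Fintype.card Δ + ∑ A ∈ C, A.length) ≠ 0 := by
    rw [hcoeff]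
    exact div_ne_zero (pow_ne_zero _ (neg_ne_zero.mpr one_ne_zero))
      (Finset.prod_pos hpos).ne'
  have hdeg := natDegree_eq_of_le_of_coeff_ne_zero hdeg_le hcoeff_ne
  have hp : p ≠ 0 := fun h => hcoeff_ne (by rw [h, coeff_zero])
  refine ⟨p, heval, hp, hdeg, by rw [leadingCoeff, hdeg, hcoeff], ?_⟩
  simpa only [IsRoot, heval] using finite_setOfPred_isRoot hp

/-- Proposition 2.1: `det Q(z)` is a nonzero polynomial in `z` of degree
`|Δ| + ∑_{A∈𝒞}|A|`, with leading coefficient `(−1)^{|Δ|+|𝒞|} / ∏_{A∈𝒞} P_{A₁→A₂⋯A_{|A|}}`;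
hence the linear system is nonsingular for all but finitely many `z`. -/
theorem statement4 {Δ : Type*} [Fintype Δ] [DecidableEq Δ] [Inhabited Δ]
    (Pm : Δ → Δ → ℝ) (C : Finset (List Δ)) (hne : ∀ K ∈ C, K ≠ [])
    (hsub : ∀ K ∈ C, ∀ T ∈ C, K <:+: T → K = T)
    (hpos : ∀ K ∈ C, 0 < tailProb Pm K) :
    ∃ p : Polynomial ℝ,
      (∀ z : ℝ, p.eval z = (Qmat Pm C z).det) ∧
      p ≠ 0 ∧
      p.natDegree = Fintype.card Δ + ∑ A ∈ C, A.length ∧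
      p.leadingCoeff = (-1) ^ (Fintype.card Δ + C.card) / ∏ A ∈ C, tailProb Pm A ∧
      {z : ℝ | (Qmat Pm C z).det = 0}.Finite :=
  statement4_general Pm C hne hpos
end

section
/- (Example 1, generating function) For the Markov chain on {1,2,3} with uniform initial distribution, transition rows (3/4,0,1/4), (0,3/4,1/4), (1/4,1/4,1/2), and 𝒞 = {323, 313, 33}, for 0 < α ≤ 1 one has E(α^τ) = α²(α²−16)/(3(3α³+24α−32)). -/
/-!
A five-state automaton (`Phase`) reads the chain and records whether a pattern of `𝒞` has
occurred and, if not, whether the word read so far ends in `3` or in `31`/`32`. It does not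
distinguish the letters `1` and `2`, and exchanging them is a symmetry of the transition matrix,
so the probabilities `phaseMass n s` of being in phase `s` at time `n + 1` obey a linear
recursion (`Phase.transfer`), and `P(τ = n + 1) = phaseMass n hit`. No measurability of `Z` is
assumed: cylinder probabilities are products of transition probabilities and add up to `1`,
which forces outer measure to be additive on unions of cylinders. A linear potential on the
phases `idle`, `three`, `threeX` decays geometrically, so their generating functions and that
of `hit` converge for `0 < α ≤ 1`; the recursion becomes a linear system for them whose
solution is the formula.
-/

open MeasureTheory

/-- The transition matrix of Example 1, on `Fin 3` (state `s` of the paper is `s-1`). -/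
noncomputable def exPm : Fin 3 → Fin 3 → ℝ :=
  fun i j => (!![3/4, 0, 1/4; 0, 3/4, 1/4; 1/4, 1/4, 1/2] : Matrix (Fin 3) (Fin 3) ℝ) i j

/-- `𝒞 = {323, 313, 33}` of Example 1, coded on `Fin 3` (so `3 ↦ 2`, `2 ↦ 1`, `1 ↦ 0`). -/
def exC : Finset (List (Fin 3)) := {[2,1,2], [2,0,2], [2,2]}

lemma Nat.sInf_eq_succ_iff {s : Set ℕ} {k : ℕ} :
    sInf s = k + 1 ↔ k + 1 ∈ s ∧ ∀ m < k + 1, m ∉ s := by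
  refine ⟨fun h => ?_, fun ⟨hk, hlt⟩ =>
    IsLeast.csInf_eq ⟨hk, fun m hm => not_lt.1 fun h => hlt m h hm⟩⟩
  have hne : s.Nonempty := Set.nonempty_iff_ne_empty.2 fun he => by simp [he] at h
  exact ⟨h ▸ Nat.sInf_mem hne, fun m hm => Nat.notMem_of_lt_sInf (h ▸ hm)⟩

lemma Fin.sum_univ_fun_eq_sum_snoc {α M : Type*} [Fintype α] [AddCommMonoid M] {n : ℕ}
    (f : (Fin (n + 1) → α) → M) : ∑ v, f v = ∑ u : Fin n → α, ∑ j, f (Fin.snoc u j) := by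
  rw [← (Fin.snocEquiv fun _ => α).sum_comp, Fintype.sum_prod_type, Finset.sum_comm]
  rfl

lemma List.ofFn_snoc {α : Type*} {n : ℕ} (u : Fin n → α) (j : α) :
    List.ofFn (Fin.snoc u j : Fin (n + 1) → α) = List.ofFn u ++ [j] := by
  rw [List.ofFn_succ']
  simp [List.concat_eq_append]

lemma List.append_singleton_suffix_append_singleton_iff {α : Type*} {K l : List α} {b j : α} :
    K ++ [b] <:+ l ++ [j] ↔ K <:+ l ∧ b = j := by
  rw [← List.reverse_prefix]
  simp only [List.reverse_append, List.reverse_singleton, List.singleton_append,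
    List.cons_prefix_cons, List.reverse_prefix, and_comm]

lemma List.exists_lt_length_take_append_singleton {α : Type*} {p : List α → Prop}
    (l : List α) (j : α) :
    (∃ m < (l ++ [j]).length, p ((l ++ [j]).take m)) ↔ (∃ m < l.length, p (l.take m)) ∨ p l := by
  simp only [List.length_append, List.length_singleton, Nat.lt_succ_iff_lt_or_eq, or_and_right,
    exists_or, exists_eq_left]
  refine or_congr (exists_congr fun m => and_congr_right fun hm => ?_) ?_
  · rw [List.take_append_of_le_length hm.le]
  · rw [List.take_append_of_le_length le_rfl, List.take_length]

lemma MeasureTheory.measure_biUnion_finset_eq_sum_of_iUnion_eq_univ {Ω ι : Type*}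
    [MeasurableSpace Ω] [Fintype ι] {μ : Measure Ω} [IsFiniteMeasure μ] {S : ι → Set Ω}
    (hcover : ⋃ i, S i = Set.univ) (hsum : ∑ i, μ (S i) ≤ μ Set.univ) (A : Finset ι) :
    μ (⋃ i ∈ A, S i) = ∑ i ∈ A, μ (S i) := by
  classical
  refine le_antisymm (measure_biUnion_finset_le A S) ?_
  have hsplit : μ Set.univ ≤ μ (⋃ i ∈ A, S i) + μ (⋃ i ∈ Aᶜ, S i) := by
    refine (measure_mono fun ω _ => ?_).trans (measure_union_le _ _)
    obtain ⟨i, hi⟩ := Set.mem_iUnion.1 (hcover.symm ▸ Set.mem_univ ω : ω ∈ ⋃ i, S i)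
    by_cases hA : i ∈ A
    · exact Or.inl (Set.mem_biUnion hA hi)
    · exact Or.inr (Set.mem_biUnion (Finset.mem_compl.2 hA) hi)
  have hfin : ∑ i ∈ Aᶜ, μ (S i) ≠ ⊤ := ENNReal.sum_ne_top.2 fun i _ => measure_ne_top μ _
  refine (ENNReal.add_le_add_iff_right hfin).1 ?_
  calc ∑ i ∈ A, μ (S i) + ∑ i ∈ Aᶜ, μ (S i) = ∑ i, μ (S i) := Finset.sum_add_sum_compl A _
    _ ≤ μ (⋃ i ∈ A, S i) + μ (⋃ i ∈ Aᶜ, S i) := hsum.trans hsplit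
    _ ≤ μ (⋃ i ∈ A, S i) + ∑ i ∈ Aᶜ, μ (S i) := by gcongr; exact measure_biUnion_finset_le _ S

section MarkovPaths

variable {Ω Δ : Type*}

def pathWeight (π : Δ → ℝ) (Pm : Δ → Δ → ℝ) {n : ℕ} (v : Fin (n + 1) → Δ) : ℝ :=
  π (v 0) * ∏ i : Fin n, Pm (v i.castSucc) (v i.succ)

lemma pathWeight_snoc (π : Δ → ℝ) (Pm : Δ → Δ → ℝ) {n : ℕ} (u : Fin (n + 1) → Δ) (j : Δ) :
    pathWeight π Pm (Fin.snoc u j : Fin (n + 2) → Δ)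
      = pathWeight π Pm u * Pm (u (Fin.last n)) j := by
  simp [pathWeight, Fin.prod_univ_castSucc, ← Fin.castSucc_succ, mul_assoc]

lemma pathWeight_nonneg {π : Δ → ℝ} {Pm : Δ → Δ → ℝ} (hπ : ∀ i, 0 ≤ π i)
    (hPm : ∀ i j, 0 ≤ Pm i j) {n : ℕ} (v : Fin (n + 1) → Δ) : 0 ≤ pathWeight π Pm v :=
  mul_nonneg (hπ _) (Finset.prod_nonneg fun _ _ => hPm _ _)

lemma sum_pathWeight [Fintype Δ] {π : Δ → ℝ} {Pm : Δ → Δ → ℝ} (hπ : ∑ i, π i = 1)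
    (hPm : ∀ i, ∑ j, Pm i j = 1) (n : ℕ) : ∑ v : Fin (n + 1) → Δ, pathWeight π Pm v = 1 := by
  induction n with
  | zero => simpa [pathWeight, hπ] using (Equiv.funUnique (Fin 1) Δ).sum_comp π
  | succ n ih =>
    simp_rw [Fin.sum_univ_fun_eq_sum_snoc (n := n + 1), pathWeight_snoc, ← Finset.mul_sum, hPm,
      mul_one, ih]

def pathCylinder (Z : ℕ → Ω → Δ) {n : ℕ} (v : Fin n → Δ) : Set Ω :=
  {ω | ∀ i : Fin n, Z (i + 1) ω = v i}

lemma pathCylinder_snoc (Z : ℕ → Ω → Δ) {n : ℕ} (u : Fin n → Δ) (j : Δ) :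
    pathCylinder Z (Fin.snoc u j : Fin (n + 1) → Δ) = pathCylinder Z u ∩ {ω | Z (n + 1) ω = j} := by
  ext ω
  simp [pathCylinder, Fin.forall_fin_succ', Fin.snoc_castSucc]

lemma setOf_forall_eq_pathCylinder (Z : ℕ → Ω → Δ) {n : ℕ} (u : Fin n → Δ) {w : ℕ → Δ}
    (hw : ∀ i : Fin n, w (i + 1) = u i) :
    {ω | ∀ k, 1 ≤ k → k ≤ n → Z k ω = w k} = pathCylinder Z u := by
  ext ω
  refine ⟨fun h i => hw i ▸ h _ (by omega) (by omega), fun h k hk1 hk2 => ?_⟩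
  obtain ⟨i, rfl⟩ : ∃ i : Fin n, k = i + 1 := ⟨⟨k - 1, by omega⟩, by simp; omega⟩
  exact (hw i).symm ▸ h i

variable [MeasurableSpace Ω] {P : Measure Ω} {Z : ℕ → Ω → Δ} {Pm : Δ → Δ → ℝ} {π : Δ → ℝ}

lemma IsMarkov.measure_pathCylinder_snoc (hM : IsMarkov P Z Pm) {n : ℕ} (u : Fin (n + 1) → Δ)
    (j : Δ) :
    (P (pathCylinder Z (Fin.snoc u j : Fin (n + 2) → Δ))).toReal
      = (P (pathCylinder Z u)).toReal * Pm (u (Fin.last n)) j := by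
  let w : ℕ → Δ := fun k => if h : k - 1 < n + 1 then u ⟨k - 1, h⟩ else j
  have hw : ∀ i : Fin (n + 1), w (i + 1) = u i := fun i => by
    simp only [w, Nat.add_sub_cancel, dif_pos i.isLt, Fin.eta]
  have hlast : w (n + 1) = u (Fin.last n) := hw (Fin.last n)
  have h := hM (n + 1) w j (by omega)
  rwa [Set.ofPred_and, setOf_forall_eq_pathCylinder Z u hw, ← pathCylinder_snoc, hlast] at h

lemma IsMarkov.measure_pathCylinder (hM : IsMarkov P Z Pm)
    (hinit : ∀ j, (P {ω | Z 1 ω = j}).toReal = π j) {n : ℕ} (v : Fin (n + 1) → Δ) :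
    (P (pathCylinder Z v)).toReal = pathWeight π Pm v := by
  induction n with
  | zero => simpa [pathCylinder, pathWeight, Fin.forall_fin_one] using hinit (v 0)
  | succ n ih => rw [← Fin.snoc_init_self v, hM.measure_pathCylinder_snoc, ih, pathWeight_snoc]

lemma IsMarkov.measure_setOf_path [Fintype Δ] [IsProbabilityMeasure P] (hM : IsMarkov P Z Pm)
    (hinit : ∀ j, (P {ω | Z 1 ω = j}).toReal = π j) (hπ : ∑ i, π i = 1)
    (hPm : ∀ i, ∑ j, Pm i j = 1) {n : ℕ} (Q : (Fin (n + 1) → Δ) → Prop) [DecidablePred Q] :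
    (P {ω | Q fun i => Z (i + 1) ω}).toReal = ∑ v with Q v, pathWeight π Pm v := by
  have hevent : {ω | Q fun i => Z (i + 1) ω} = ⋃ v ∈ ({v | Q v} : Finset _), pathCylinder Z v := by
    ext ω
    simp [pathCylinder, ← funext_iff]
  have hcover : ⋃ v : Fin (n + 1) → Δ, pathCylinder Z v = Set.univ := by
    ext ω
    simp [pathCylinder, ← funext_iff]
  have hfin : ∀ v : Fin (n + 1) → Δ, P (pathCylinder Z v) ≠ ⊤ := fun v => measure_ne_top P _
  have htotal : ∑ v : Fin (n + 1) → Δ, P (pathCylinder Z v) = 1 := by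
    rw [← ENNReal.ofReal_toReal (ENNReal.sum_ne_top.2 fun v _ => hfin v),
      ENNReal.toReal_sum fun v _ => hfin v]
    simp [hM.measure_pathCylinder hinit, sum_pathWeight hπ hPm]
  rw [hevent, measure_biUnion_finset_eq_sum_of_iUnion_eq_univ hcover (by simp [htotal]),
    ENNReal.toReal_sum fun v _ => hfin v]
  exact Finset.sum_congr rfl fun v _ => hM.measure_pathCylinder hinit v

end MarkovPaths

section FirstHit

variable {Ω Δ : Type*}

def HasPatternSuffix (C : Finset (List Δ)) (l : List Δ) : Prop := ∃ K ∈ C, K <:+ l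

def IsFirstHit (C : Finset (List Δ)) (l : List Δ) : Prop :=
  HasPatternSuffix C l ∧ ∀ m < l.length, ¬ HasPatternSuffix C (l.take m)

lemma occursAt_iff_isSuffix (Z : ℕ → Ω → Δ) (K : List Δ) (ω : Ω) (n : ℕ) :
    occursAt Z K ω n ↔ K <:+ List.ofFn fun i : Fin n => Z (i + 1) ω := by
  rw [occursAt, List.suffix_iff_eq_drop, List.ext_get_iff]
  simp only [List.length_drop, List.length_ofFn, List.get_eq_getElem, List.getElem_drop,
    List.getElem_ofFn]
  constructor
  · rintro ⟨hlen, h⟩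
    refine ⟨by omega, fun m h1 h2 => ?_⟩
    rw [← h ⟨m, h1⟩]
    congr 1
    dsimp only
    omega
  · rintro ⟨hlen, h⟩
    refine ⟨by omega, fun m => ?_⟩
    rw [h m m.isLt (by omega)]
    congr 1
    omega

lemma hitTime_eq_succ_iff (Z : ℕ → Ω → Δ) (C : Finset (List Δ)) (ω : Ω) (n : ℕ) :
    hitTime Z C ω = n + 1 ↔ IsFirstHit C (List.ofFn fun i : Fin (n + 1) => Z (i + 1) ω) := by
  have hset : {m | ∃ K ∈ C, occursAt Z K ω m}
      = {m | HasPatternSuffix C (List.ofFn fun i : Fin m => Z (i + 1) ω)} := by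
    simp only [HasPatternSuffix, occursAt_iff_isSuffix]
  rw [hitTime, hset, Nat.sInf_eq_succ_iff, IsFirstHit, List.length_ofFn]
  refine and_congr Iff.rfl (forall₂_congr fun m hm => ?_)
  rw [← Fin.ofFn_take_eq_take_ofFn (by omega)]
  rfl

end FirstHit

/-- States of an automaton reading the chain, in the paper's letters (`3` is coded `2`): `three`
after a trailing `3`, `threeX` after a trailing `31` or `32`, `hit` just after the first
completed pattern, `stopped` afterwards. -/
inductive Phase
  | idle | three | threeX | hit | stopped
  deriving DecidableEq

instance : Fintype Phase :=
  ⟨{.idle, .three, .threeX, .hit, .stopped}, fun s => by cases s <;> simp⟩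

lemma Phase.sum_univ_eq {M : Type*} [AddCommMonoid M] (f : Phase → M) :
    ∑ s, f s = f .idle + f .three + f .threeX + f .hit + f .stopped := by
  simp [Finset.univ, Fintype.elems, add_assoc]

def Phase.step (s : Phase) (j : Fin 3) : Phase :=
  match s with
  | .idle => if j = 2 then .three else .idle
  | .three => if j = 2 then .hit else .threeX
  | .threeX => if j = 2 then .hit else .idle
  | .hit | .stopped => .stopped

def phase (l : List (Fin 3)) : Phase := l.foldl Phase.step .idle

lemma phase_append_singleton (l : List (Fin 3)) (j : Fin 3) :
    phase (l ++ [j]) = (phase l).step j := by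
  simp [phase]

lemma phase_ofFn_snoc {n : ℕ} (u : Fin n → Fin 3) (j : Fin 3) :
    phase (List.ofFn (Fin.snoc u j : Fin (n + 1) → Fin 3)) = (phase (List.ofFn u)).step j := by
  rw [List.ofFn_snoc, phase_append_singleton]

lemma hasPatternSuffix_exC_append_singleton (l : List (Fin 3)) (j : Fin 3) :
    HasPatternSuffix exC (l ++ [j]) ↔ j = 2 ∧ ([2] <:+ l ∨ [2, 0] <:+ l ∨ [2, 1] <:+ l) := by
  simp only [HasPatternSuffix, exC, Finset.mem_insert, Finset.mem_singleton, exists_eq_or_imp,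
    exists_eq_left]
  rw [show ([2, 1, 2] : List (Fin 3)) = [2, 1] ++ [2] from rfl,
    show ([2, 0, 2] : List (Fin 3)) = [2, 0] ++ [2] from rfl,
    show ([2, 2] : List (Fin 3)) = [2] ++ [2] from rfl]
  simp only [List.append_singleton_suffix_append_singleton_iff]
  aesop

open Classical in
lemma phase_eq_ite (l : List (Fin 3)) : phase l =
    if ∃ m < l.length, HasPatternSuffix exC (l.take m) then .stopped
    else if HasPatternSuffix exC l then .hit
    else if [2] <:+ l then .three
    else if [2, 0] <:+ l ∨ [2, 1] <:+ l then .threeX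
    else .idle := by
  induction l using List.reverseRecOn with
  | nil => simp [phase, HasPatternSuffix, exC]
  | append_singleton l j ih =>
    rw [phase_append_singleton, ih]
    simp only [List.exists_lt_length_take_append_singleton, hasPatternSuffix_exC_append_singleton,
      List.singleton_suffix_append_singleton_iff]
    rw [show ([2, 0] : List (Fin 3)) = [2] ++ [0] from rfl,
      show ([2, 1] : List (Fin 3)) = [2] ++ [1] from rfl]
    simp only [List.append_singleton_suffix_append_singleton_iff]
    fin_cases j <;> split_ifs <;> simp_all [Phase.step] <;> grind

lemma phase_eq_hit_iff (l : List (Fin 3)) : phase l = .hit ↔ IsFirstHit exC l := by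
  rw [phase_eq_ite, IsFirstHit]
  split_ifs <;> simp_all

noncomputable def Phase.transfer : Phase → Phase → ℝ
  | .idle, .idle => 3 / 4
  | .idle, .three => 1 / 4
  | .three, .threeX => 1 / 2
  | .three, .hit => 1 / 2
  | .threeX, .idle => 3 / 4
  | .threeX, .hit => 1 / 4
  | .hit, .stopped => 1
  | .stopped, .stopped => 1
  | _, _ => 0

lemma exPm_nonneg (i j : Fin 3) : 0 ≤ exPm i j := by
  fin_cases i <;> fin_cases j <;> norm_num [exPm]

lemma sum_exPm (i : Fin 3) : ∑ j, exPm i j = 1 := by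
  fin_cases i <;> simp [exPm, Fin.sum_univ_three] <;> norm_num

/-- The phase `s.step x` determines the letter `x` up to swapping `0` and `1`, a symmetry of both
`exPm` and `Phase.step`: this is why the phases form a Markov chain. -/
lemma sum_exPm_step (s : Phase) (x : Fin 3) (t : Phase) :
    ∑ j, (if (s.step x).step j = t then exPm x j else 0) = (s.step x).transfer t := by
  cases s <;> fin_cases x <;> cases t <;>
    simp [Phase.step, Phase.transfer, exPm, Fin.sum_univ_three] <;> norm_num

lemma sum_exPm_phase_step {n : ℕ} (u : Fin (n + 1) → Fin 3) (t : Phase) :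
    ∑ j, (if (phase (List.ofFn u)).step j = t then exPm (u (Fin.last n)) j else 0)
      = (phase (List.ofFn u)).transfer t := by
  have h := sum_exPm_step (phase (List.ofFn (Fin.init u))) (u (Fin.last n)) t
  rwa [← phase_ofFn_snoc, Fin.snoc_init_self] at h

noncomputable def phaseMass (n : ℕ) (s : Phase) : ℝ :=
  ∑ v : Fin (n + 1) → Fin 3 with phase (List.ofFn v) = s, pathWeight (fun _ => 1 / 3) exPm v

lemma phaseMass_nonneg (n : ℕ) (s : Phase) : 0 ≤ phaseMass n s :=
  Finset.sum_nonneg fun v _ => pathWeight_nonneg (fun _ => by norm_num) exPm_nonneg v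

lemma phaseMass_zero (s : Phase) :
    phaseMass 0 s = if s = .idle then 2 / 3 else if s = .three then 1 / 3 else 0 := by
  have h : phaseMass 0 s = ∑ j, if Phase.idle.step j = s then 1 / 3 else 0 := by
    simp only [phaseMass, Finset.sum_filter]
    rw [Fin.sum_univ_fun_eq_sum_snoc]
    simp [pathWeight, phase]
    rfl
  rw [h, Fin.sum_univ_three]
  cases s <;> norm_num +decide

lemma phaseMass_succ (n : ℕ) (t : Phase) :
    phaseMass (n + 1) t = ∑ s, phaseMass n s * s.transfer t := by
  have hrow : ∀ u : Fin (n + 1) → Fin 3,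
      ∑ j, (if phase (List.ofFn (Fin.snoc u j : Fin (n + 2) → Fin 3)) = t
        then pathWeight (fun _ => 1 / 3) exPm (Fin.snoc u j : Fin (n + 2) → Fin 3) else 0)
      = pathWeight (fun _ => 1 / 3) exPm u * (phase (List.ofFn u)).transfer t := by
    intro u
    simp only [phase_ofFn_snoc, pathWeight_snoc, ← sum_exPm_phase_step u t, Finset.mul_sum,
      mul_ite, mul_zero]
  simp only [phaseMass, Finset.sum_filter]
  rw [Fin.sum_univ_fun_eq_sum_snoc]
  simp only [hrow, ite_mul, zero_mul, Finset.sum_mul]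
  rw [Finset.sum_comm]
  simp

lemma measure_hitTime_eq_phaseMass {Ω : Type*} [MeasurableSpace Ω] {P : Measure Ω}
    [IsProbabilityMeasure P] {Z : ℕ → Ω → Fin 3} (hM : IsMarkov P Z exPm)
    (hinit : ∀ j : Fin 3, (P {ω | Z 1 ω = j}).toReal = 1 / 3) (n : ℕ) :
    (P {ω | hitTime Z exC ω = n + 1}).toReal = phaseMass n .hit := by
  simp_rw [hitTime_eq_succ_iff, ← phase_eq_hit_iff]
  exact hM.measure_setOf_path hinit (by norm_num) sum_exPm
    (fun v => phase (List.ofFn v) = .hit)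

/-- `(1, 1/2, 4/5)` is a left sub-eigenvector, for the value `15/16`, of the restriction of
`Phase.transfer` to `idle`, `three`, `threeX`. -/
lemma phaseMass_potential_le (n : ℕ) :
    phaseMass n .idle + 1 / 2 * phaseMass n .three + 4 / 5 * phaseMass n .threeX
      ≤ (15 / 16) ^ n := by
  induction n with
  | zero => simp only [phaseMass_zero, reduceCtorEq, if_true, if_false]; norm_num
  | succ n ih =>
    simp only [phaseMass_succ, Phase.sum_univ_eq, Phase.transfer]
    have := phaseMass_nonneg n .idle
    have := phaseMass_nonneg n .three
    rw [pow_succ]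
    nlinarith

lemma phaseMass_le (n : ℕ) {s : Phase} (hs : s ≠ .stopped) :
    phaseMass n s ≤ 2 * (15 / 16) ^ n := by
  have hV := phaseMass_potential_le
  have h0 := phaseMass_nonneg
  have hpow : ∀ n, 0 ≤ ((15 : ℝ) / 16) ^ n := fun n => by positivity
  cases s with
  | idle => linarith [hV n, h0 n .three, h0 n .threeX, hpow n]
  | three => linarith [hV n, h0 n .idle, h0 n .threeX]
  | threeX => linarith [hV n, h0 n .idle, h0 n .three, hpow n]
  | hit =>
    cases n with
    | zero => simp [phaseMass_zero]
    | succ n =>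
      simp only [phaseMass_succ, Phase.sum_univ_eq, Phase.transfer]
      rw [pow_succ]
      linarith [hV n, h0 n .idle, h0 n .three, h0 n .threeX, hpow n]
  | stopped => exact absurd rfl hs

lemma summable_phaseMass_mul_pow {s : Phase} (hs : s ≠ .stopped) {α : ℝ} (h0 : 0 ≤ α) (h1 : α ≤ 1) :
    Summable fun n => phaseMass n s * α ^ (n + 1) :=
  Summable.of_nonneg_of_le (fun n => mul_nonneg (phaseMass_nonneg n s) (pow_nonneg h0 _))
    (fun n => (mul_le_of_le_one_right (phaseMass_nonneg n s) (pow_le_one₀ h0 h1)).trans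
      (phaseMass_le n hs))
    ((summable_geometric_of_lt_one (by norm_num) (by norm_num)).mul_left 2)

noncomputable def phaseGenFun (α : ℝ) (s : Phase) : ℝ := ∑' n, phaseMass n s * α ^ (n + 1)

lemma phaseGenFun_eq {t : Phase} (ht : t ≠ .stopped) {α : ℝ} (h0 : 0 ≤ α) (h1 : α ≤ 1) :
    phaseGenFun α t = α * (phaseMass 0 t + ∑ s, s.transfer t * phaseGenFun α s) := by
  have hsummable : ∀ s, Summable fun n => s.transfer t * (phaseMass n s * α ^ (n + 1)) := by
    intro s
    by_cases hs : s = .stopped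
    · subst hs
      cases t <;> simp_all [Phase.transfer]
    · exact (summable_phaseMass_mul_pow hs h0 h1).mul_left _
  have hshift : ∀ n, phaseMass (n + 1) t * α ^ (n + 1 + 1)
      = α * ∑ s, s.transfer t * (phaseMass n s * α ^ (n + 1)) := by
    intro n
    rw [phaseMass_succ, Finset.sum_mul, Finset.mul_sum]
    exact Finset.sum_congr rfl fun s _ => by ring
  rw [phaseGenFun, (summable_phaseMass_mul_pow ht h0 h1).tsum_eq_zero_add, tsum_congr hshift,
    tsum_mul_left, Summable.tsum_finsetSum fun s _ => hsummable s]
  simp only [tsum_mul_left, phaseGenFun]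
  ring

/-- Example 1, generating function: for `0 < α ≤ 1`,
`E(α^τ) = α²(α²−16)/(3(3α³+24α−32))`. -/
theorem statement12 {Ω : Type*} [MeasurableSpace Ω]
    (P : Measure Ω) [IsProbabilityMeasure P] (Z : ℕ → Ω → Fin 3)
    (hMarkov : IsMarkov P Z exPm)
    (hinit : ∀ j : Fin 3, (P {ω | Z 1 ω = j}).toReal = 1/3)
    (α : ℝ) (hα0 : 0 < α) (hα1 : α ≤ 1) :
    (∑' n : ℕ, (P {ω | hitTime Z exC ω = n + 1}).toReal * α ^ (n+1))
      = α^2 * (α^2 - 16) / (3 * (3*α^3 + 24*α - 32)) := by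
  simp_rw [measure_hitTime_eq_phaseMass hMarkov hinit]
  have hgf := fun t (ht : t ≠ Phase.stopped) => phaseGenFun_eq ht hα0.le hα1
  have hidle := hgf .idle (by decide)
  have hthree := hgf .three (by decide)
  have hthreeX := hgf .threeX (by decide)
  have hhit := hgf .hit (by decide)
  simp +decide only [Phase.sum_univ_eq, Phase.transfer, phaseMass_zero] at hidle hthree hthreeX hhit
  norm_num at hidle hthree hthreeX hhit
  have hthree_solved : phaseGenFun α .three * (96 - 72 * α - 9 * α ^ 3) = 32 * α - 8 * α ^ 2 := by
    linear_combination (24 * α) * hidle + (96 - 72 * α) * hthree + 18 * α ^ 2 * hthreeX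
  have hden : 3 * (3 * α ^ 3 + 24 * α - 32) ≠ 0 := by
    nlinarith [pow_le_one₀ hα0.le hα1 (n := 3)]
  change phaseGenFun α .hit = _
  rw [eq_div_iff hden]
  linear_combination (3 * (3 * α ^ 3 + 24 * α - 32)) * hhit
    + (3 * (3 * α ^ 3 + 24 * α - 32) * α / 4) * hthreeX - (α / 2 + α ^ 2 / 8) * hthree_solved
end
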